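/- Let f : 2^V → ℝ be a symmetric submodular function on a finite set V of cardinality n ≥ 2, and let (v_1, …, v_n) be a minimum degree ordering (MD-ordering) of V with respect to f. Then (v_{n−1}, v_n) is a flat pair with respect to f, i.e., f(X) ≥ min_{x ∈ X} f({x}) for every subset X ⊊ V with |X ∩ {v_{n−1}, v_n}| = 1. -/
import Mathlib


open Finset

def Submodular {V : Type*} [DecidableEq V] [Fintype V] (f : Finset V → ℝ) : Prop :=
  ∀ X Y : Finset V, f X + f Y ≥ f (X ∪ Y) + f (X ∩ Y)

def prefSet {V : Type*} [DecidableEq V] {n : ℕ} (v : Fin n → V) (i : Fin n) : Finset V :=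
  (Finset.univ.filter (fun k : Fin n => k < i)).image v

/-- An ordering `(v 0, …, v (n-1))` of `V` is a minimum degree ordering (MD-ordering)
with respect to `f` if `f (V_{i-1} ∪ {v_i}) + f {v_i} ≤ f (V_{i-1} ∪ {v_j}) + f {v_j}`
for all `i ≤ j`. -/
def IsMDOrdering {V : Type*} [DecidableEq V] {n : ℕ} (f : Finset V → ℝ) (v : Fin n → V) : Prop :=
  ∀ i j : Fin n, i ≤ j →
    f (insert (v i) (prefSet v i)) + f {v i} ≤
      f (insert (v j) (prefSet v i)) + f {v j}

/-- A pair `(u, w)` of distinct elements of `V` is a flat pair with respect to `f` if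
`f X ≥ min_{x ∈ X} f {x}` for every `X ⊊ V` with `|X ∩ {u, w}| = 1`. -/
def FlatPair {V : Type*} [DecidableEq V] [Fintype V]
    (f : Finset V → ℝ) (u w : V) : Prop :=
  ∀ X : Finset V, X ⊂ Finset.univ → (X ∩ ({u, w} : Finset V)).card = 1 →
    ∀ hX : X.Nonempty, X.inf' hX (fun x => f {x}) ≤ f X

section NagamochiAux

variable {V : Type*} [DecidableEq V] [Fintype V] {n : ℕ}

lemma image_compl_of_bijective (v : Fin n → V) (hv : Function.Bijective v)
    (S : Finset (Fin n)) : (S.image v)ᶜ = Sᶜ.image v := by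
  ext x
  obtain ⟨k, rfl⟩ := hv.2 x
  simp only [Finset.mem_compl, Finset.mem_image]
  constructor
  · intro h
    refine ⟨k, fun hk => h ⟨k, hk, rfl⟩, rfl⟩
  · rintro ⟨a, ha, hEq⟩ ⟨b, hb, hEq'⟩
    have hab : a = b := hv.1 (hEq.trans hEq'.symm)
    exact ha (hab ▸ hb)

set_option maxHeartbeats 1000000 in
/-- The key lemma: for an MD-ordering, for any `t` and any nonempty `Y ⊆ {v_t, …, v_n}`
containing exactly one of the last two elements, with `m` the minimum-position element
of `Y`, one has `f(R_t \ {v_m}) + f({v_m}) ≤ f(R_t \ Y) + f(Y)`. -/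
lemma nagamochi_key (hn : 2 ≤ n)
    (f : Finset V → ℝ) (hsym : ∀ X : Finset V, f X = f Xᶜ) (hf : Submodular f)
    (v : Fin n → V) (hv : Function.Bijective v) (hord : IsMDOrdering f v)
    (i₀ i₁ : Fin n) (hi₀ : i₀.val = n - 2) (hi₁ : i₁.val = n - 1) :
    ∀ (N : ℕ) (t : Fin n) (Y : Finset (Fin n)) (hY : Y.Nonempty),
      Y ⊆ Finset.Ici t → (Y ∩ {i₀, i₁}).card = 1 →
      2 * (n - t.val) + (if t ∈ Y then 1 else 0) ≤ N →
      f ((Finset.Ici t \ {Y.min' hY}).image v) + f {v (Y.min' hY)} ≤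
        f ((Finset.Ici t \ Y).image v) + f (Y.image v) := by
  have himgc := image_compl_of_bijective v hv
  intro N
  induction N with
  | zero =>
    intro t Y hY _ _ hμ
    exfalso
    have := t.isLt
    split_ifs at hμ <;> omega
  | succ N ih =>
    intro t Y hY hsub hsep hμ
    set m := Y.min' hY with hm
    have hmY : m ∈ Y := Y.min'_mem hY
    have htm : t ≤ m := Finset.mem_Ici.mp (hsub hmY)
    by_cases hsing : Y = {m}
    · exact le_of_eq (by rw [hsing, Finset.image_singleton])
    by_cases htY : t ∈ Y
    · -- flip case : t ∈ Y, so m = t; use MD and induction on the complement inside Ici t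
      have hmt : m = t := le_antisymm (Y.min'_le t htY) htm
      have htn : t.val ≤ n - 2 := by
        by_contra h
        have htval : t.val = n - 1 := by have := t.isLt; omega
        have hIci : Finset.Ici t = {t} := by
          ext k
          simp only [Finset.mem_Ici, Finset.mem_singleton, Fin.le_def, Fin.ext_iff]
          have := k.isLt
          omega
        apply hsing
        rw [hmt]
        exact Finset.Subset.antisymm (hIci ▸ hsub) (Finset.singleton_subset_iff.mpr htY)
      have hsd : (Finset.Ici t \ Y) ∩ {i₀, i₁} = {i₀, i₁} \ Y := by
        ext k
        simp only [Finset.mem_inter, Finset.mem_sdiff, Finset.mem_Ici, Finset.mem_insert,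
          Finset.mem_singleton]
        constructor
        · rintro ⟨⟨_, hk2⟩, hk3⟩; exact ⟨hk3, hk2⟩
        · rintro ⟨hk1, hk2⟩
          refine ⟨⟨?_, hk2⟩, hk1⟩
          rcases hk1 with rfl | rfl <;> rw [Fin.le_def] <;> omega
      have hi01 : i₀ ≠ i₁ := by
        intro h
        have := congrArg Fin.val h
        omega
      have hcards : ({i₀, i₁} : Finset (Fin n)).card = 2 := Finset.card_pair hi01
      have hsep2 : (({i₀, i₁} : Finset (Fin n)) \ Y).card = 1 := by
        have h1 := Finset.card_inter_add_card_sdiff ({i₀, i₁} : Finset (Fin n)) Y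
        rw [Finset.inter_comm, hsep, hcards] at h1
        omega
      have hY' : (Finset.Ici t \ Y).Nonempty := by
        have h2 : (({i₀, i₁} : Finset (Fin n)) \ Y).Nonempty :=
          Finset.card_pos.mp (by omega)
        obtain ⟨k, hk⟩ := h2
        rw [← hsd] at hk
        exact ⟨k, (Finset.mem_inter.mp hk).1⟩
      have hsep' : ((Finset.Ici t \ Y) ∩ {i₀, i₁}).card = 1 := by rw [hsd]; exact hsep2
      set q := (Finset.Ici t \ Y).min' hY' with hqdef
      have hqmem : q ∈ Finset.Ici t \ Y := (Finset.Ici t \ Y).min'_mem hY'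
      have hq1 : t ≤ q := Finset.mem_Ici.mp (Finset.mem_sdiff.mp hqmem).1
      have hμ' : 2 * (n - t.val) + (if t ∈ (Finset.Ici t \ Y) then 1 else 0) ≤ N := by
        rw [if_pos htY] at hμ
        rw [if_neg (fun hc => (Finset.mem_sdiff.mp hc).2 htY)]
        omega
      have hIH := ih t (Finset.Ici t \ Y) hY' Finset.sdiff_subset hsep' hμ'
      have hYY : Finset.Ici t \ (Finset.Ici t \ Y) = Y := by
        ext k
        simp only [Finset.mem_sdiff, Finset.mem_Ici, not_and, not_not]
        constructor
        · rintro ⟨h1, h2⟩; exact h2 h1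
        · intro hk; exact ⟨Finset.mem_Ici.mp (hsub hk), fun _ => hk⟩
      rw [hYY] at hIH
      have hconv : ∀ j : Fin n, f (insert (v j) (prefSet v t)) =
          f ((Finset.Ici t \ {j}).image v) := by
        intro j
        have h1 : insert (v j) (prefSet v t) =
            (insert j (Finset.univ.filter (fun k : Fin n => k < t))).image v := by
          unfold prefSet
          rw [Finset.image_insert]
        rw [h1, hsym, himgc]
        have h2 : (insert j (Finset.univ.filter (fun k : Fin n => k < t)))ᶜ
            = Finset.Ici t \ {j} := by
          ext k
          simp only [Finset.mem_compl, Finset.mem_insert, Finset.mem_filter, Finset.mem_univ,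
            true_and, Finset.mem_sdiff, Finset.mem_Ici, Finset.mem_singleton, Fin.ext_iff,
            Fin.lt_def, Fin.le_def]
          omega
        rw [h2]
      have hmd := hord t q hq1
      rw [hconv t, hconv q] at hmd
      rw [hmt]
      linarith [hmd, hIH]
    · -- increment case : t ∉ Y; move t one step up
      have htm' : t < m := lt_of_le_of_ne htm (fun h => htY (by rw [h]; exact hmY))
      have hmlt := m.isLt
      have htlt : t.val + 1 < n := by
        rw [Fin.lt_def] at htm'
        omega
      set t' : Fin n := ⟨t.val + 1, htlt⟩ with ht'def
      have hval : t'.val = t.val + 1 := rfl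
      have httle : t ≤ t' := by rw [Fin.le_def, hval]; omega
      have hsub' : Y ⊆ Finset.Ici t' := by
        intro y hy
        have h1 : t ≤ y := Finset.mem_Ici.mp (hsub hy)
        have h2 : y.val ≠ t.val := fun hh => htY (by rwa [← Fin.ext_iff.mpr hh]  )
        rw [Finset.mem_Ici, Fin.le_def, hval]
        rw [Fin.le_def] at h1
        omega
      have hμ' : 2 * (n - t'.val) + (if t' ∈ Y then 1 else 0) ≤ N := by
        rw [if_neg htY] at hμ
        have := t.isLt
        rw [hval]
        split_ifs <;> omega
      have hIH := ih t' Y hY hsub' hsep hμ'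
      have hsm := hf ((Finset.Ici t' \ {m}).image v) ((Finset.Ici t \ Y).image v)
      have hU : (Finset.Ici t' \ {m}).image v ∪ (Finset.Ici t \ Y).image v
          = (Finset.Ici t \ {m}).image v := by
        rw [← Finset.image_union]
        congr 1
        ext k
        simp only [Finset.mem_union, Finset.mem_sdiff, Finset.mem_Ici, Finset.mem_singleton]
        constructor
        · rintro (⟨h1, h2⟩ | ⟨h1, h2⟩)
          · exact ⟨le_trans httle h1, h2⟩
          · exact ⟨h1, fun h => h2 (by rw [h]; exact hmY)⟩
        · rintro ⟨h1, h2⟩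
          by_cases hkY : k ∈ Y
          · left
            refine ⟨?_, h2⟩
            have h3 : k.val ≠ t.val := fun hh => htY (by rwa [← Fin.ext_iff.mpr hh])
            rw [Fin.le_def] at h1 ⊢
            rw [hval]
            omega
          · exact Or.inr ⟨h1, hkY⟩
      have hI : (Finset.Ici t' \ {m}).image v ∩ (Finset.Ici t \ Y).image v
          = (Finset.Ici t' \ Y).image v := by
        rw [← Finset.image_inter _ _ hv.1]
        congr 1
        ext k
        simp only [Finset.mem_inter, Finset.mem_sdiff, Finset.mem_Ici, Finset.mem_singleton]
        constructor
        · rintro ⟨⟨h1, _⟩, ⟨_, h4⟩⟩; exact ⟨h1, h4⟩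
        · rintro ⟨h1, h2⟩
          exact ⟨⟨h1, fun h => h2 (by rw [h]; exact hmY)⟩, ⟨le_trans httle h1, h2⟩⟩
      rw [hU, hI] at hsm
      linarith [hIH, hsm]

end NagamochiAux

set_option maxHeartbeats 1000000 in
/-- Nagamochi's theorem: for a symmetric submodular `f` and an MD-ordering
`(v_1, …, v_n)` of `V`, the pair `(v_{n-1}, v_n)` is a flat pair. -/
theorem stmt_7 {n : ℕ} (hn : 2 ≤ n) {V : Type*} [DecidableEq V] [Fintype V]
    (f : Finset V → ℝ) (hsym : ∀ X : Finset V, f X = f Xᶜ) (hf : Submodular f)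
    (v : Fin n → V) (hv : Function.Bijective v)
    (hord : IsMDOrdering f v) :
    FlatPair f (v ⟨n - 2, by omega⟩) (v ⟨n - 1, by omega⟩) := by
  classical
  intro X hXss hXcard hX
  set i₀ : Fin n := ⟨n - 2, by omega⟩ with hi₀def
  set i₁ : Fin n := ⟨n - 1, by omega⟩ with hi₁def
  set T : Finset (Fin n) := Finset.univ.filter (fun k => v k ∈ X) with hTdef
  have hTX : T.image v = X := by
    ext x
    obtain ⟨k, rfl⟩ := hv.2 x
    simp only [hTdef, Finset.mem_image, Finset.mem_filter, Finset.mem_univ, true_and]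
    constructor
    · rintro ⟨a, ha, hEq⟩; rwa [← hEq]
    · intro hk; exact ⟨k, hk, rfl⟩
  have hT : T.Nonempty := by
    obtain ⟨x, hx⟩ := hX
    obtain ⟨k, rfl⟩ := hv.2 x
    exact ⟨k, by simp [hTdef, hx]⟩
  have hcard : (T ∩ ({i₀, i₁} : Finset (Fin n))).card = 1 := by
    have himg : (T ∩ ({i₀, i₁} : Finset (Fin n))).image v = X ∩ {v i₀, v i₁} := by
      rw [Finset.image_inter _ _ hv.1, hTX]
      congr 1
      simp
    have hc := Finset.card_image_of_injective (T ∩ ({i₀, i₁} : Finset (Fin n))) hv.1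
    rw [himg] at hc
    rw [← hc]
    exact hXcard
  have h0n : 0 < n := by omega
  have hIci : Finset.Ici (⟨0, h0n⟩ : Fin n) = Finset.univ := by
    ext k
    simp only [Finset.mem_Ici, Finset.mem_univ, iff_true, Fin.le_def]
    omega
  have hkey := nagamochi_key hn f hsym hf v hv hord i₀ i₁ rfl rfl (2 * n + 1) ⟨0, h0n⟩ T hT
    (by rw [hIci]; exact Finset.subset_univ T) hcard (by split_ifs <;> omega)
  rw [hIci] at hkey
  have h1 : f ((Finset.univ \ ({T.min' hT} : Finset (Fin n))).image v) = f {v (T.min' hT)} := by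
    rw [← Finset.compl_eq_univ_sdiff, ← image_compl_of_bijective v hv,
      Finset.image_singleton, ← hsym]
  have h2 : f ((Finset.univ \ T).image v) = f X := by
    rw [← Finset.compl_eq_univ_sdiff, ← image_compl_of_bijective v hv, hTX, ← hsym]
  rw [h1, h2, hTX] at hkey
  have hmX : v (T.min' hT) ∈ X := by
    rw [← hTX]
    exact Finset.mem_image_of_mem v (T.min'_mem hT)
  have hinf : X.inf' hX (fun x => f {x}) ≤ f {v (T.min' hT)} := Finset.inf'_le _ hmX
  linarith [hkey, hinf]
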